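/- Let y_1, …, y_k ∈ ℝ^d, let ε > 0, and set δ = ε/2. Define the sequences α₀ = 3/4, α_{t+1} = (α_t/2)·(√(α_t² + 4) − α_t), and x⁽⁰⁾ = v⁽⁰⁾ = ȳ := (1/k)·Σ_{i=1}^k y_i, x⁽ᵗ⁺¹⁾ = v⁽ᵗ⁾ − δ·∇F_δ(v⁽ᵗ⁾), v⁽ᵗ⁺¹⁾ = x⁽ᵗ⁺¹⁾ + (α_t(1 − α_t)/(α_t² + α_{t+1}))·(x⁽ᵗ⁺¹⁾ − x⁽ᵗ⁾). If t satisfies (16/(9(t+1)²))·[ F_{ε/2}(ȳ) + (9/(4ε))·F_{ε/2}(ȳ)² ] < ε/2, then F(x⁽ᵗ⁾) − F(m̂) < ε, where m̂ is a minimizer of F. -/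

import Mathlib

open Finset
open scoped RealInnerProductSpace

/-!
`F_δ` is convex with a `δ⁻¹`-Lipschitz gradient, and Algorithm 1 is Nesterov's accelerated
gradient method on `F_δ` with step `δ`. The momentum coefficient is chosen so that the point
`u_t = x_t + α_t⁻¹ (v_t - x_t)` moves by the plain gradient step
`u_{t+1} = u_t - (δ / α_t) ∇F_δ(v_t)`; together with `α_{t+1}² = (1 - α_{t+1}) α_t²` this makes
`F_δ(x_{t+1}) - F_δ(z) + α_t² / (2δ) ‖u_{t+1} - z‖²` at most `α_t²` times its initial value, and
`α_t ≤ 2 / (t + 2)`. For `z = m̂` the initial value is controlled by `F_δ(ȳ)`, since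
`‖ȳ - m̂‖ ≤ F(m̂) ≤ F(ȳ) ≤ F_δ(ȳ)`, so the termination condition gives
`F_δ(x_t) - F_δ(m̂) < ε / 2`, and `F ≤ F_δ ≤ F + δ` turns this into the claim.
-/

section FirstOrder

variable {E : Type*} [NormedAddCommGroup E] [InnerProductSpace ℝ E]

def FirstOrderConvex (f : E → ℝ) (g : E → E) : Prop :=
  ∀ w z, f w + ⟪g w, z - w⟫ ≤ f z

def QuadraticUpperBound (L : ℝ) (f : E → ℝ) (g : E → E) : Prop :=
  ∀ w h, f (w + h) ≤ f w + ⟪g w, h⟫ + L / 2 * ‖h‖ ^ 2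

variable {f : E → ℝ} {g : E → E} {L : ℝ}

theorem FirstOrderConvex.comp_sub (hf : FirstOrderConvex f g) (y : E) :
    FirstOrderConvex (fun z => f (z - y)) (fun z => g (z - y)) := by
  intro w z
  simpa only [sub_sub_sub_cancel_right] using hf (w - y) (z - y)

theorem QuadraticUpperBound.comp_sub (hf : QuadraticUpperBound L f g) (y : E) :
    QuadraticUpperBound L (fun z => f (z - y)) (fun z => g (z - y)) := by
  intro w h
  simpa only [add_sub_right_comm] using hf (w - y) h

theorem FirstOrderConvex.const_mul_sum {ι : Type*} [Fintype ι] {f : ι → E → ℝ}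
    {g : ι → E → E} (hf : ∀ i, FirstOrderConvex (f i) (g i)) {c : ℝ} (hc : 0 ≤ c) :
    FirstOrderConvex (fun z => c * ∑ i, f i z) (fun z => c • ∑ i, g i z) := by
  intro w z
  rw [real_inner_smul_left, sum_inner, ← mul_add, ← sum_add_distrib]
  exact mul_le_mul_of_nonneg_left (sum_le_sum fun i _ => hf i w z) hc

theorem QuadraticUpperBound.const_mul_sum {ι : Type*} [Fintype ι] {f : ι → E → ℝ}
    {g : ι → E → E} (hf : ∀ i, QuadraticUpperBound L (f i) (g i)) {c : ℝ} (hc : 0 ≤ c) :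
    QuadraticUpperBound (c * Fintype.card ι * L) (fun z => c * ∑ i, f i z)
      (fun z => c • ∑ i, g i z) := by
  intro w h
  calc c * ∑ i, f i (w + h) ≤ c * ∑ i, (f i w + ⟪g i w, h⟫ + L / 2 * ‖h‖ ^ 2) :=
        mul_le_mul_of_nonneg_left (sum_le_sum fun i _ => hf i w h) hc
    _ = _ := by
      rw [sum_add_distrib, sum_add_distrib, real_inner_smul_left, sum_inner, sum_const,
        card_univ, nsmul_eq_mul]
      ring

theorem QuadraticUpperBound.le_sub_of_step {η : ℝ} (hf : QuadraticUpperBound η⁻¹ f g)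
    (hη : 0 < η) (w : E) : f (w - η • g w) ≤ f w - η / 2 * ‖g w‖ ^ 2 := by
  have h := hf w (-(η • g w))
  rw [← sub_eq_add_neg, inner_neg_right, real_inner_smul_right, real_inner_self_eq_norm_sq,
    norm_neg, norm_smul, Real.norm_of_nonneg hη.le] at h
  calc _ ≤ _ := h
    _ = _ := by field_simp; ring

end FirstOrder

section StepSizes

variable {α : ℕ → ℝ}

theorem alpha_succ_sq (hα : ∀ t, α (t + 1) = α t / 2 * (√(α t ^ 2 + 4) - α t)) (t : ℕ) :
    α (t + 1) ^ 2 = (1 - α (t + 1)) * α t ^ 2 := by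
  rw [hα t]
  linear_combination α t ^ 2 / 4 * Real.sq_sqrt (by positivity : 0 ≤ α t ^ 2 + 4)

theorem alpha_pos (h0 : 0 < α 0) (hα : ∀ t, α (t + 1) = α t / 2 * (√(α t ^ 2 + 4) - α t)) :
    ∀ t, 0 < α t
  | 0 => h0
  | t + 1 => by
    have ha := alpha_pos h0 hα t
    have hlt : α t < √(α t ^ 2 + 4) := Real.lt_sqrt_of_sq_lt (by linarith)
    rw [hα t]
    exact mul_pos (by positivity) (by linarith)

theorem inv_alpha_add_half_le (h0 : 0 < α 0)
    (hα : ∀ t, α (t + 1) = α t / 2 * (√(α t ^ 2 + 4) - α t)) (t : ℕ) :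
    (α t)⁻¹ + 1 / 2 ≤ (α (t + 1))⁻¹ := by
  have ha := alpha_pos h0 hα t
  have hb := alpha_pos h0 hα (t + 1)
  have hrel := alpha_succ_sq hα t
  have hpq : ((α (t + 1))⁻¹ - 1 / 2) ^ 2 = (α t)⁻¹ ^ 2 + 1 / 4 := by
    field_simp
    linear_combination (-16) * hrel
  have hb1 : α (t + 1) < 1 := by nlinarith
  have hp : 1 < (α (t + 1))⁻¹ := one_lt_inv_iff₀.2 ⟨hb, hb1⟩
  nlinarith [inv_pos.2 ha]

theorem alpha_le_two_div (h0 : 0 < α 0) (h1 : α 0 ≤ 1)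
    (hα : ∀ t, α (t + 1) = α t / 2 * (√(α t ^ 2 + 4) - α t)) (t : ℕ) :
    α t ≤ 2 / (t + 2) := by
  have hinv : ((t : ℝ) + 2) / 2 ≤ (α t)⁻¹ := by
    induction t with
    | zero => simpa using one_le_inv₀ h0 |>.2 h1
    | succ t ih =>
      push_cast
      linarith [inv_alpha_add_half_le h0 hα t]
  rw [← inv_div]
  exact (le_inv_comm₀ (by positivity) (alpha_pos h0 hα t)).1 hinv

end StepSizes

section Nesterov

variable {E : Type*} [NormedAddCommGroup E] [InnerProductSpace ℝ E]
  {f : E → ℝ} {g : E → E} {η : ℝ} {α : ℕ → ℝ} {x v : ℕ → E}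

noncomputable def estimatePoint (α : ℕ → ℝ) (x v : ℕ → E) (t : ℕ) : E :=
  x t + (α t)⁻¹ • (v t - x t)

theorem momentum_coeff_eq {a b : ℝ} (ha : 0 < a) (hb : 0 < b) (h : b ^ 2 = (1 - b) * a ^ 2) :
    a * (1 - a) / (a ^ 2 + b) = b * (1 - a) / a := by
  rw [div_eq_div_iff (by positivity) ha.ne']
  linear_combination (a - 1) * h

theorem estimatePoint_succ (hα : ∀ t, 0 < α t)
    (hrel : ∀ t, α (t + 1) ^ 2 = (1 - α (t + 1)) * α t ^ 2)
    (hx : ∀ t, x (t + 1) = v t - η • g (v t))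
    (hv : ∀ t, v (t + 1) =
      x (t + 1) + (α t * (1 - α t) / (α t ^ 2 + α (t + 1))) • (x (t + 1) - x t))
    (t : ℕ) :
    estimatePoint α x v (t + 1) = estimatePoint α x v t - (η / α t) • g (v t) := by
  have ha := hα t
  have hb := hα (t + 1)
  rw [estimatePoint, estimatePoint, hv t, momentum_coeff_eq ha hb (hrel t), hx t]
  match_scalars <;> field_simp <;> ring

theorem nesterov_step (hconv : FirstOrderConvex f g) (hsmooth : QuadraticUpperBound η⁻¹ f g)
    (hη : 0 < η) (hα : ∀ t, 0 < α t) (hα1 : ∀ t, α t ≤ 1)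
    (hrel : ∀ t, α (t + 1) ^ 2 = (1 - α (t + 1)) * α t ^ 2)
    (hx : ∀ t, x (t + 1) = v t - η • g (v t))
    (hv : ∀ t, v (t + 1) =
      x (t + 1) + (α t * (1 - α t) / (α t ^ 2 + α (t + 1))) • (x (t + 1) - x t))
    (t : ℕ) (z : E) :
    f (x (t + 1)) - f z ≤ (1 - α t) * (f (x t) - f z) + α t ^ 2 / (2 * η) *
      (‖estimatePoint α x v t - z‖ ^ 2 - ‖estimatePoint α x v (t + 1) - z‖ ^ 2) := by
  have hu := estimatePoint_succ hα hrel hx hv t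
  set u := estimatePoint α x v
  set G := g (v t)
  have ha := hα t
  have hdesc : f (x (t + 1)) ≤ f (v t) - η / 2 * ‖G‖ ^ 2 :=
    hx t ▸ hsmooth.le_sub_of_step hη (v t)
  have hvx := mul_le_mul_of_nonneg_left (hconv (v t) (x t)) (sub_nonneg.2 (hα1 t))
  have hvz := mul_le_mul_of_nonneg_left (hconv (v t) z) ha.le
  have hcomb : (1 - α t) • (x t - v t) + α t • (z - v t) = α t • (z - u t) := by
    simp only [u, estimatePoint]
    match_scalars <;> field_simp <;> ring
  have hinner : (1 - α t) * ⟪G, x t - v t⟫ + α t * ⟪G, z - v t⟫ = α t * ⟪G, z - u t⟫ := by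
    rw [← real_inner_smul_right, ← real_inner_smul_right, ← inner_add_right, hcomb,
      real_inner_smul_right]
  have hnorm : α t ^ 2 / (2 * η) * (‖u t - z‖ ^ 2 - ‖u (t + 1) - z‖ ^ 2) =
      -(α t * ⟪G, z - u t⟫) - η / 2 * ‖G‖ ^ 2 := by
    rw [hu, sub_right_comm, norm_sub_sq_real (u t - z), real_inner_smul_right, norm_smul,
      Real.norm_of_nonneg (by positivity), real_inner_comm, ← neg_sub (u t) z, inner_neg_right]
    field_simp
    ring
  linarith

theorem nesterov_potential_le (hconv : FirstOrderConvex f g)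
    (hsmooth : QuadraticUpperBound η⁻¹ f g) (hη : 0 < η) (hα : ∀ t, 0 < α t)
    (hα1 : ∀ t, α t ≤ 1) (hrel : ∀ t, α (t + 1) ^ 2 = (1 - α (t + 1)) * α t ^ 2)
    (hx : ∀ t, x (t + 1) = v t - η • g (v t))
    (hv : ∀ t, v (t + 1) =
      x (t + 1) + (α t * (1 - α t) / (α t ^ 2 + α (t + 1))) • (x (t + 1) - x t))
    (z : E) (t : ℕ) :
    f (x (t + 1)) - f z + α t ^ 2 / (2 * η) * ‖estimatePoint α x v (t + 1) - z‖ ^ 2 ≤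
      α t ^ 2 * ((1 - α 0) / α 0 ^ 2 * (f (x 0) - f z) +
        ‖estimatePoint α x v 0 - z‖ ^ 2 / (2 * η)) := by
  have hstep := nesterov_step hconv hsmooth hη hα hα1 hrel hx hv
  induction t with
  | zero =>
    have h0 := hα 0
    have hrhs : α 0 ^ 2 * ((1 - α 0) / α 0 ^ 2 * (f (x 0) - f z) +
        ‖estimatePoint α x v 0 - z‖ ^ 2 / (2 * η)) = (1 - α 0) * (f (x 0) - f z) +
        α 0 ^ 2 / (2 * η) * ‖estimatePoint α x v 0 - z‖ ^ 2 := by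
      field_simp
    linarith [hstep 0 z]
  | succ t ih =>
    have hrel_t := hrel t
    calc f (x (t + 2)) - f z + α (t + 1) ^ 2 / (2 * η) * ‖estimatePoint α x v (t + 2) - z‖ ^ 2
        ≤ (1 - α (t + 1)) * (f (x (t + 1)) - f z + α t ^ 2 / (2 * η) *
            ‖estimatePoint α x v (t + 1) - z‖ ^ 2) := by
          linear_combination hstep (t + 1) z +
            ‖estimatePoint α x v (t + 1) - z‖ ^ 2 / (2 * η) * hrel_t
      _ ≤ (1 - α (t + 1)) * (α t ^ 2 * ((1 - α 0) / α 0 ^ 2 * (f (x 0) - f z) +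
            ‖estimatePoint α x v 0 - z‖ ^ 2 / (2 * η))) :=
          mul_le_mul_of_nonneg_left ih (sub_nonneg.2 (hα1 _))
      _ = _ := by rw [← mul_assoc, ← hrel_t]

theorem nesterov_bound (hconv : FirstOrderConvex f g)
    (hsmooth : QuadraticUpperBound η⁻¹ f g) (hη : 0 < η) (hα : ∀ t, 0 < α t)
    (hα1 : ∀ t, α t ≤ 1) (hrel : ∀ t, α (t + 1) ^ 2 = (1 - α (t + 1)) * α t ^ 2)
    (hx : ∀ t, x (t + 1) = v t - η • g (v t))
    (hv : ∀ t, v (t + 1) =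
      x (t + 1) + (α t * (1 - α t) / (α t ^ 2 + α (t + 1))) • (x (t + 1) - x t))
    (hxv : v 0 = x 0) (z : E) (t : ℕ) :
    f (x (t + 1)) - f z ≤
      α t ^ 2 * ((1 - α 0) / α 0 ^ 2 * (f (x 0) - f z) + ‖x 0 - z‖ ^ 2 / (2 * η)) := by
  have h := nesterov_potential_le hconv hsmooth hη hα hα1 hrel hx hv z t
  have hu0 : estimatePoint α x v 0 = x 0 := by
    rw [estimatePoint, hxv, sub_self, smul_zero, add_zero]
  rw [hu0] at h
  have : 0 ≤ α t ^ 2 / (2 * η) * ‖estimatePoint α x v (t + 1) - z‖ ^ 2 := by positivity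
  linarith

theorem nesterov_rate (hconv : FirstOrderConvex f g) (hsmooth : QuadraticUpperBound η⁻¹ f g)
    (hη : 0 < η) (h0 : 0 < α 0) (h1 : α 0 ≤ 1)
    (hα : ∀ t, α (t + 1) = α t / 2 * (√(α t ^ 2 + 4) - α t))
    (hx : ∀ t, x (t + 1) = v t - η • g (v t))
    (hv : ∀ t, v (t + 1) =
      x (t + 1) + (α t * (1 - α t) / (α t ^ 2 + α (t + 1))) • (x (t + 1) - x t))
    (hxv : v 0 = x 0) {z : E} {R : ℝ}
    (hR : (1 - α 0) / α 0 ^ 2 * (f (x 0) - f z) + ‖x 0 - z‖ ^ 2 / (2 * η) ≤ R) (hR0 : 0 ≤ R)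
    (t : ℕ) :
    f (x (t + 1)) - f z ≤ (2 / (t + 2)) ^ 2 * R := by
  have hpos := alpha_pos h0 hα
  have hle := alpha_le_two_div h0 h1 hα
  have hle1 (t : ℕ) : α t ≤ 1 := (hle t).trans (div_le_one_of_le₀ (by linarith) (by positivity))
  calc f (x (t + 1)) - f z ≤ α t ^ 2 *
        ((1 - α 0) / α 0 ^ 2 * (f (x 0) - f z) + ‖x 0 - z‖ ^ 2 / (2 * η)) :=
        nesterov_bound hconv hsmooth hη hpos hle1 (alpha_succ_sq hα) hx hv hxv z t
    _ ≤ α t ^ 2 * R := by gcongr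
    _ ≤ (2 / (t + 2)) ^ 2 * R := by
        gcongr
        · exact (hpos t).le
        · exact hle t

end Nesterov

section Charbonnier

variable {E : Type*} [NormedAddCommGroup E] {δ : ℝ}

noncomputable def charbonnier (δ : ℝ) (a : E) : ℝ := √(‖a‖ ^ 2 + δ ^ 2)

theorem sq_charbonnier (δ : ℝ) (a : E) : charbonnier δ a ^ 2 = ‖a‖ ^ 2 + δ ^ 2 :=
  Real.sq_sqrt (by positivity)

theorem charbonnier_nonneg (δ : ℝ) (a : E) : 0 ≤ charbonnier δ a := Real.sqrt_nonneg _

theorem norm_le_charbonnier (δ : ℝ) (a : E) : ‖a‖ ≤ charbonnier δ a :=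
  Real.le_sqrt_of_sq_le (by nlinarith)

theorem abs_le_charbonnier (δ : ℝ) (a : E) : |δ| ≤ charbonnier δ a :=
  Real.abs_le_sqrt (by nlinarith [sq_nonneg ‖a‖])

theorem charbonnier_le_norm_add (hδ : 0 ≤ δ) (a : E) : charbonnier δ a ≤ ‖a‖ + δ :=
  (Real.sqrt_le_left (by positivity)).2 (by nlinarith [norm_nonneg a])

variable [InnerProductSpace ℝ E]

noncomputable def charbonnierGrad (δ : ℝ) (a : E) : E := (charbonnier δ a)⁻¹ • a

theorem firstOrderConvex_charbonnier (hδ : 0 < δ) :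
    FirstOrderConvex (charbonnier δ) (charbonnierGrad (E := E) δ) := by
  intro a b
  have ha := sq_charbonnier δ a
  have hb := sq_charbonnier δ b
  have ha0 : 0 < charbonnier δ a := (abs_pos.2 hδ.ne').trans_le (abs_le_charbonnier δ a)
  have hb0 := charbonnier_nonneg δ b
  -- Cauchy–Schwarz for `(‖a‖, δ)` and `(‖b‖, δ)` in `ℝ²`
  have hcs : ‖a‖ * ‖b‖ + δ ^ 2 ≤ charbonnier δ a * charbonnier δ b := by
    nlinarith [sq_nonneg (δ * (‖a‖ - ‖b‖)), mul_nonneg ha0.le hb0,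
      mul_nonneg (norm_nonneg a) (norm_nonneg b)]
  have hab := real_inner_le_norm a b
  rw [charbonnierGrad, real_inner_smul_left, inner_sub_right, real_inner_self_eq_norm_sq,
    ← le_sub_iff_add_le', inv_mul_le_iff₀ ha0]
  nlinarith

theorem quadraticUpperBound_charbonnier (hδ : 0 < δ) :
    QuadraticUpperBound δ⁻¹ (charbonnier δ) (charbonnierGrad (E := E) δ) := by
  intro a h
  set c := charbonnier δ a
  have hc := sq_charbonnier δ a
  have hδc : δ ≤ c := (le_abs_self δ).trans (abs_le_charbonnier δ a)
  have hc0 : 0 < c := hδ.trans_le hδc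
  have hac : ‖a‖ ≤ c := norm_le_charbonnier δ a
  have hp : -(‖a‖ * ‖h‖) ≤ ⟪a, h⟫ := (abs_le.1 (abs_real_inner_le_norm a h)).1
  -- the difference of the squares of the two sides is `(⟪a, h⟫ + ‖h‖² / 2)²`
  have hmain : charbonnier δ (a + h) ≤ (c ^ 2 + ⟪a, h⟫ + ‖h‖ ^ 2 / 2) / c := by
    have hnum : 0 ≤ c ^ 2 + ⟪a, h⟫ + ‖h‖ ^ 2 / 2 := by
      nlinarith [mul_le_mul_of_nonneg_right hac (norm_nonneg h), sq_nonneg (c - ‖h‖)]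
    rw [charbonnier, Real.sqrt_le_left (div_nonneg hnum hc0.le), div_pow,
      le_div_iff₀ (by positivity), norm_add_sq_real]
    nlinarith [sq_nonneg (⟪a, h⟫ + ‖h‖ ^ 2 / 2)]
  have hq : ‖h‖ ^ 2 / (2 * c) ≤ δ⁻¹ / 2 * ‖h‖ ^ 2 := by
    rw [div_le_iff₀ (by positivity)]
    field_simp
    nlinarith [sq_nonneg ‖h‖]
  calc charbonnier δ (a + h) ≤ c + c⁻¹ * ⟪a, h⟫ + ‖h‖ ^ 2 / (2 * c) := by
        convert hmain using 1; field_simp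
    _ ≤ c + ⟪charbonnierGrad δ a, h⟫ + δ⁻¹ / 2 * ‖h‖ ^ 2 := by
        rw [charbonnierGrad, real_inner_smul_left]; linarith

end Charbonnier

section MeanCharbonnier

variable {E : Type*} [NormedAddCommGroup E] {k : ℕ} {δ : ℝ}

noncomputable def meanDist (y : Fin k → E) (z : E) : ℝ := (k : ℝ)⁻¹ * ∑ i, ‖z - y i‖

noncomputable def meanCharbonnier (δ : ℝ) (y : Fin k → E) (z : E) : ℝ :=
  (k : ℝ)⁻¹ * ∑ i, charbonnier δ (z - y i)

theorem meanDist_nonneg (y : Fin k → E) (z : E) : 0 ≤ meanDist y z := by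
  unfold meanDist; positivity

theorem meanCharbonnier_nonneg (δ : ℝ) (y : Fin k → E) (z : E) : 0 ≤ meanCharbonnier δ y z :=
  mul_nonneg (by positivity) (sum_nonneg fun i _ => charbonnier_nonneg δ _)

theorem meanDist_le_meanCharbonnier (δ : ℝ) (y : Fin k → E) (z : E) :
    meanDist y z ≤ meanCharbonnier δ y z :=
  mul_le_mul_of_nonneg_left (sum_le_sum fun i _ => norm_le_charbonnier δ _) (by positivity)

theorem meanCharbonnier_le_meanDist_add (hk : k ≠ 0) (hδ : 0 ≤ δ) (y : Fin k → E) (z : E) :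
    meanCharbonnier δ y z ≤ meanDist y z + δ := by
  calc meanCharbonnier δ y z ≤ (k : ℝ)⁻¹ * ∑ i, (‖z - y i‖ + δ) :=
        mul_le_mul_of_nonneg_left (sum_le_sum fun i _ => charbonnier_le_norm_add hδ _)
          (by positivity)
    _ = meanDist y z + δ := by
      rw [meanDist, sum_add_distrib, sum_const, card_univ, Fintype.card_fin, nsmul_eq_mul,
        mul_add, inv_mul_cancel_left₀ (Nat.cast_ne_zero.2 hk)]

variable [InnerProductSpace ℝ E]

noncomputable def meanCharbonnierGrad (δ : ℝ) (y : Fin k → E) (z : E) : E :=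
  (k : ℝ)⁻¹ • ∑ i, charbonnierGrad δ (z - y i)

theorem firstOrderConvex_meanCharbonnier (hδ : 0 < δ) (y : Fin k → E) :
    FirstOrderConvex (meanCharbonnier δ y) (meanCharbonnierGrad δ y) :=
  FirstOrderConvex.const_mul_sum (fun i => (firstOrderConvex_charbonnier hδ).comp_sub (y i))
    (by positivity)

theorem quadraticUpperBound_meanCharbonnier (hk : k ≠ 0) (hδ : 0 < δ) (y : Fin k → E) :
    QuadraticUpperBound δ⁻¹ (meanCharbonnier δ y) (meanCharbonnierGrad δ y) := by
  have h := QuadraticUpperBound.const_mul_sum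
    (fun i => (quadraticUpperBound_charbonnier (E := E) hδ).comp_sub (y i))
    (inv_nonneg.2 (Nat.cast_nonneg k))
  rwa [Fintype.card_fin, inv_mul_cancel₀ (Nat.cast_ne_zero.2 hk), one_mul] at h

theorem norm_mean_sub_le_meanDist (hk : k ≠ 0) (y : Fin k → E) (z : E) :
    ‖(k : ℝ)⁻¹ • ∑ i, y i - z‖ ≤ meanDist y z := by
  have hmean : (k : ℝ)⁻¹ • ∑ i, y i - z = (k : ℝ)⁻¹ • ∑ i, (y i - z) := by
    rw [sum_sub_distrib, smul_sub, sum_const, card_univ, Fintype.card_fin,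
      ← Nat.cast_smul_eq_nsmul ℝ, inv_smul_smul₀ (Nat.cast_ne_zero.2 hk)]
  rw [hmean, norm_smul, Real.norm_of_nonneg (by positivity), meanDist]
  gcongr
  exact (norm_sum_le _ _).trans_eq (by simp only [norm_sub_rev])

end MeanCharbonnier

/-- **Guarantee for Algorithm 1 (accelerated gradient descent on the Charbonnier
relaxation)** (Theorem `thm:subopt0`). With `δ = ε/2`, `F(z) = (1/k) Σ ‖z − yⱼ‖`,
`F_δ(z) = (1/k) Σ √(‖z − yᵢ‖² + δ²)`, iterates as in Algorithm 1, if `t` satisfies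
the termination condition `(16/(9(t+1)²))·(F_{ε/2}(ȳ) + (9/(4ε)) F_{ε/2}(ȳ)²) < ε/2`,
then `F(x⁽ᵗ⁾) − F(m̂) < ε` for any minimizer `m̂` of `F`. -/
theorem stmt14 {d k : ℕ} (hk : 0 < k)
    (y : Fin k → EuclideanSpace ℝ (Fin d))
    (ε : ℝ) (hε : 0 < ε)
    (δ : ℝ) (hδ : δ = ε / 2)
    (F : EuclideanSpace ℝ (Fin d) → ℝ)
    (hF : ∀ z, F z = (k : ℝ)⁻¹ * ∑ j, ‖z - y j‖)
    (Fδ : EuclideanSpace ℝ (Fin d) → ℝ)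
    (hFδ : ∀ z, Fδ z = (k : ℝ)⁻¹ * ∑ i, Real.sqrt (‖z - y i‖ ^ 2 + δ ^ 2))
    (gradFδ : EuclideanSpace ℝ (Fin d) → EuclideanSpace ℝ (Fin d))
    (hgrad : ∀ z, gradFδ z =
      (k : ℝ)⁻¹ • ∑ i, (Real.sqrt (‖z - y i‖ ^ 2 + δ ^ 2))⁻¹ • (z - y i))
    (ybar : EuclideanSpace ℝ (Fin d)) (hybar : ybar = (k : ℝ)⁻¹ • ∑ i, y i)
    (α : ℕ → ℝ) (hα0 : α 0 = 3 / 4)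
    (hα : ∀ t, α (t + 1) = (α t / 2) * (Real.sqrt ((α t) ^ 2 + 4) - α t))
    (x v : ℕ → EuclideanSpace ℝ (Fin d))
    (hx0 : x 0 = ybar) (hv0 : v 0 = ybar)
    (hxrec : ∀ t, x (t + 1) = v t - δ • gradFδ (v t))
    (hvrec : ∀ t, v (t + 1) = x (t + 1) +
      ((α t * (1 - α t)) / ((α t) ^ 2 + α (t + 1))) • (x (t + 1) - x t))
    (mhat : EuclideanSpace ℝ (Fin d)) (hmhat : ∀ z, F mhat ≤ F z)
    (t : ℕ)
    (ht : (16 / (9 * ((t : ℝ) + 1) ^ 2)) * (Fδ ybar + (9 / (4 * ε)) * (Fδ ybar) ^ 2)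
      < ε / 2) :
    F (x t) - F mhat < ε := by
  obtain rfl : F = meanDist y := funext hF
  obtain rfl : Fδ = meanCharbonnier δ y := funext hFδ
  obtain rfl : gradFδ = meanCharbonnierGrad δ y := funext hgrad
  have hδ0 : 0 < δ := hδ ▸ half_pos hε
  set W := meanCharbonnier δ y ybar
  have hW : 0 ≤ W := meanCharbonnier_nonneg δ y ybar
  cases t with
  | zero =>
    have hx : meanDist y (x 0) ≤ W := by rw [hx0]; exact meanDist_le_meanCharbonnier δ y ybar
    have hsq : 0 ≤ 9 / (4 * ε) * W ^ 2 := by positivity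
    norm_num at ht
    linarith [meanDist_nonneg y mhat]
  | succ s =>
    have hdist : ‖ybar - mhat‖ ≤ W := hybar ▸
      (norm_mean_sub_le_meanDist hk.ne' y mhat).trans
        ((hmhat _).trans (meanDist_le_meanCharbonnier _ _ _))
    have hrate := nesterov_rate (firstOrderConvex_meanCharbonnier hδ0 y)
      (quadraticUpperBound_meanCharbonnier hk.ne' hδ0 y) hδ0 (by norm_num [hα0])
      (by norm_num [hα0]) hα hxrec hvrec (hv0.trans hx0.symm) (z := mhat)
      (R := 4 / 9 * W + W ^ 2 / (2 * δ)) ?_ (by positivity) s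
    · have hR : (2 / ((s : ℝ) + 2)) ^ 2 * (4 / 9 * W + W ^ 2 / (2 * δ)) =
          16 / (9 * (((s + 1 : ℕ) : ℝ) + 1) ^ 2) * (W + 9 / (4 * ε) * W ^ 2) := by
        rw [hδ]; push_cast; field_simp; ring
      linarith [meanDist_le_meanCharbonnier δ y (x (s + 1)),
        meanCharbonnier_le_meanDist_add hk.ne' hδ0.le y mhat]
    · have hsq : ‖ybar - mhat‖ ^ 2 / (2 * δ) ≤ W ^ 2 / (2 * δ) := by gcongr
      rw [hx0, hα0]
      linarith [meanCharbonnier_nonneg δ y mhat]
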